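/- Let $f: G \to X'$ be a ring $Q$-mapping at $x_0 \in G$ between metric measure spaces of Hausdorff dimensions $\alpha, \alpha' \ge 2$, let $\varepsilon_0 > 0$ with $\overline{B(x_0,\varepsilon_0)} \subset G$, and suppose for each $\varepsilon \in (0, \varepsilon_0')$ there is a nonnegative measurable function $\psi_\varepsilon: (\varepsilon, \varepsilon_0) \to [0,\infty]$ with $0 < I(\varepsilon,\varepsilon_0) := \int_\varepsilon^{\varepsilon_0} \psi_\varepsilon(t)\,dt < \infty$ and $\int_{\varepsilon < d(x,x_0) < \varepsilon_0} Q(x)\, \psi_\varepsilon^\alpha(d(x,x_0))\, d\mu(x) \le F(\varepsilon,\varepsilon_0)$. Then for every $\varepsilon \in (0, \varepsilon_0')$, $M_{\alpha'}(f(\Gamma(S(x_0,\varepsilon), S(x_0,\varepsilon_0), A))) \le F(\varepsilon,\varepsilon_0)/I^\alpha(\varepsilon,\varepsilon_0)$, where $A = \{x : \varepsilon < d(x,x_0) < \varepsilon_0\}$. -/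

import Mathlib

open MeasureTheory Metric Set ENNReal Filter Topology

/-- A (parametrized) curve in `X`: a map defined on the interval `[a, b]`. -/
structure Curve (X : Type*) where
  a : ℝ
  b : ℝ
  toFun : ℝ → X

namespace Curve

/-- The integral of a Borel density `ρ` along the curve `γ` (with respect to the
arc-length/parameter measure). -/
noncomputable def pathIntegral {X : Type*} [MeasurableSpace X]
    (ρ : X → ℝ≥0∞) (γ : Curve X) : ℝ≥0∞ :=
  ∫⁻ t in Set.Icc γ.a γ.b, ρ (γ.toFun t)

/-- `γ₂` is a restriction (subcurve) of `γ₁`. -/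
def IsSubcurve {X : Type*} (γ₂ γ₁ : Curve X) : Prop :=
  γ₁.a ≤ γ₂.a ∧ γ₂.b ≤ γ₁.b ∧ ∀ t ∈ Set.Icc γ₂.a γ₂.b, γ₂.toFun t = γ₁.toFun t

/-- `ρ` is admissible for the curve family `Γ`. -/
def IsAdmissible {X : Type*} [MeasurableSpace X]
    (Γ : Set (Curve X)) (ρ : X → ℝ≥0∞) : Prop :=
  Measurable ρ ∧ ∀ γ ∈ Γ, 1 ≤ pathIntegral ρ γ

/-- The `α`-modulus of a curve family. -/
noncomputable def modulus {X : Type*} [MeasurableSpace X]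
    (μ : Measure X) (α : ℝ) (Γ : Set (Curve X)) : ℝ≥0∞ :=
  ⨅ ρ ∈ {ρ : X → ℝ≥0∞ | IsAdmissible Γ ρ}, ∫⁻ x, ρ x ^ α ∂μ

/-- The image of a curve under a mapping. -/
def map {X Y : Type*} (f : X → Y) (γ : Curve X) : Curve Y :=
  ⟨γ.a, γ.b, f ∘ γ.toFun⟩

end Curve

/-- The family `Γ(E, F, A)` of curves joining `E` and `F` within `A`. -/
def curvesJoining {X : Type*} (E F A : Set X) : Set (Curve X) :=
  {γ : Curve X | γ.a ≤ γ.b ∧ γ.toFun γ.a ∈ E ∧ γ.toFun γ.b ∈ F ∧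
    ∀ t ∈ Set.Ioo γ.a γ.b, γ.toFun t ∈ A}

/-- `f` is a ring `Q`-mapping at `x₀ ∈ G`. -/
def IsRingQMapAt {X X' : Type*} [MetricSpace X] [MeasurableSpace X]
    [MetricSpace X'] [MeasurableSpace X']
    (μ : Measure X) (μ' : Measure X') (α α' : ℝ) (G : Set X)
    (f : X → X') (Q : X → ℝ≥0∞) (x₀ : X) : Prop :=
  ∀ r₁ r₂ : ℝ, 0 < r₁ → r₁ < r₂ →
    ∀ η : ℝ → ℝ≥0∞, Measurable η → (1 : ℝ≥0∞) ≤ ∫⁻ r in Set.Ioo r₁ r₂, η r →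
      Curve.modulus μ' α'
          (Curve.map f ''
            curvesJoining (Metric.sphere x₀ r₁) (Metric.sphere x₀ r₂)
              {x | r₁ < dist x x₀ ∧ dist x x₀ < r₂}) ≤
        ∫⁻ x in {x ∈ G | r₁ < dist x x₀ ∧ dist x x₀ < r₂},
          Q x * η (dist x x₀) ^ α ∂μ

theorem lintegral_div_const_of_ne_zero {Ω : Type*} [MeasurableSpace Ω] (μ : Measure Ω)
    (f : Ω → ℝ≥0∞) {c : ℝ≥0∞} (hc : c ≠ 0) :
    ∫⁻ x, f x / c ∂μ = (∫⁻ x, f x ∂μ) / c := by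
  simp only [div_eq_mul_inv]
  exact lintegral_mul_const' _ _ (ENNReal.inv_ne_top.2 hc)

theorem IsRingQMapAt.modulus_le_div_rpow {X X' : Type*}
    [MetricSpace X] [MeasurableSpace X] [MetricSpace X'] [MeasurableSpace X']
    {μ : Measure X} {μ' : Measure X'} {α α' : ℝ} {G : Set X} {f : X → X'}
    {Q : X → ℝ≥0∞} {x₀ : X} (hf : IsRingQMapAt μ μ' α α' G f Q x₀) (hα : 0 ≤ α)
    {r₁ r₂ : ℝ} (hr₁ : 0 < r₁) (hr : r₁ < r₂) {ψ : ℝ → ℝ≥0∞} (hψ : Measurable ψ)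
    (hI₀ : ∫⁻ t in Ioo r₁ r₂, ψ t ≠ 0) (hI_top : ∫⁻ t in Ioo r₁ r₂, ψ t ≠ ⊤) :
    Curve.modulus μ' α'
        (Curve.map f ''
          curvesJoining (sphere x₀ r₁) (sphere x₀ r₂) {x | r₁ < dist x x₀ ∧ dist x x₀ < r₂}) ≤
      (∫⁻ x in {x | r₁ < dist x x₀ ∧ dist x x₀ < r₂}, Q x * ψ (dist x x₀) ^ α ∂μ) /
        (∫⁻ t in Ioo r₁ r₂, ψ t) ^ α := by
  set I := ∫⁻ t in Ioo r₁ r₂, ψ t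
  have hη : 1 ≤ ∫⁻ t in Ioo r₁ r₂, ψ t / I := by
    rw [lintegral_div_const_of_ne_zero _ _ hI₀, ENNReal.div_self hI₀ hI_top]
  have hIα : I ^ α ≠ 0 := (ENNReal.rpow_pos (pos_iff_ne_zero.2 hI₀) hI_top).ne'
  calc _ ≤ ∫⁻ x in {x ∈ G | r₁ < dist x x₀ ∧ dist x x₀ < r₂},
          Q x * (ψ (dist x x₀) / I) ^ α ∂μ :=
        hf r₁ r₂ hr₁ hr _ (hψ.div_const I) hη
    _ ≤ ∫⁻ x in {x | r₁ < dist x x₀ ∧ dist x x₀ < r₂}, Q x * (ψ (dist x x₀) / I) ^ α ∂μ :=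
        lintegral_mono_set fun x hx => hx.2
    _ = ∫⁻ x in {x | r₁ < dist x x₀ ∧ dist x x₀ < r₂}, Q x * ψ (dist x x₀) ^ α / I ^ α ∂μ := by
        simp only [ENNReal.div_rpow_of_nonneg _ _ hα, mul_div_assoc]
    _ = _ := lintegral_div_const_of_ne_zero _ _ hIα

theorem modulus_le_of_ringQMap_general {X X' : Type*}
    [MetricSpace X] [MeasurableSpace X] [MetricSpace X'] [MeasurableSpace X']
    (μ : Measure X) (μ' : Measure X') (α α' : ℝ) (hα : 2 ≤ α)
    (G : Set X) (f : X → X') (Q : X → ℝ≥0∞) (x₀ : X)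
    (hf : IsRingQMapAt μ μ' α α' G f Q x₀)
    (ε₀ ε₀' : ℝ) (hε₀' : ε₀' ∈ Set.Ioo 0 ε₀)
    (ψ : ℝ → ℝ → ℝ≥0∞) (F : ℝ → ℝ≥0∞)
    (hψ : ∀ ε ∈ Set.Ioo (0:ℝ) ε₀', Measurable (ψ ε))
    (hI : ∀ ε ∈ Set.Ioo (0:ℝ) ε₀',
      0 < ∫⁻ t in Set.Ioo ε ε₀, ψ ε t ∧ (∫⁻ t in Set.Ioo ε ε₀, ψ ε t) < ⊤)
    (hF : ∀ ε ∈ Set.Ioo (0:ℝ) ε₀',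
      (∫⁻ x in {x | ε < dist x x₀ ∧ dist x x₀ < ε₀},
        Q x * ψ ε (dist x x₀) ^ α ∂μ) ≤ F ε) :
    ∀ ε ∈ Set.Ioo (0:ℝ) ε₀',
      Curve.modulus μ' α'
          (Curve.map f ''
            curvesJoining (Metric.sphere x₀ ε) (Metric.sphere x₀ ε₀)
              {x | ε < dist x x₀ ∧ dist x x₀ < ε₀}) ≤
        F ε / (∫⁻ t in Set.Ioo ε ε₀, ψ ε t) ^ α := by
  intro ε hε
  obtain ⟨hI₀, hI_top⟩ := hI ε hε
  calc _ ≤ _ := hf.modulus_le_div_rpow (by linarith) hε.1 (hε.2.trans hε₀'.2) (hψ ε hε)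
        hI₀.ne' hI_top.ne
    _ ≤ _ := ENNReal.div_le_div_right (hF ε hε) _

/-- Lemma 2.2: modulus estimate for a ring `Q`-mapping from an integral bound. -/
theorem modulus_le_of_ringQMap {X X' : Type*}
    [MetricSpace X] [MeasurableSpace X] [MetricSpace X'] [MeasurableSpace X']
    (μ : Measure X) (μ' : Measure X') (α α' : ℝ) (hα : 2 ≤ α) (hα' : 2 ≤ α')
    (G : Set X) (hG : IsOpen G ∧ IsConnected G)
    (f : X → X') (Q : X → ℝ≥0∞) (x₀ : X) (hx₀ : x₀ ∈ G)
    (hf : IsRingQMapAt μ μ' α α' G f Q x₀)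
    (ε₀ ε₀' : ℝ) (hε₀ : 0 < ε₀) (hball : closure (Metric.ball x₀ ε₀) ⊆ G)
    (hε₀' : ε₀' ∈ Set.Ioo 0 ε₀)
    (ψ : ℝ → ℝ → ℝ≥0∞) (F : ℝ → ℝ≥0∞)
    (hψ : ∀ ε ∈ Set.Ioo (0:ℝ) ε₀', Measurable (ψ ε))
    (hI : ∀ ε ∈ Set.Ioo (0:ℝ) ε₀',
      0 < ∫⁻ t in Set.Ioo ε ε₀, ψ ε t ∧ (∫⁻ t in Set.Ioo ε ε₀, ψ ε t) < ⊤)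
    (hF : ∀ ε ∈ Set.Ioo (0:ℝ) ε₀',
      (∫⁻ x in {x | ε < dist x x₀ ∧ dist x x₀ < ε₀},
        Q x * ψ ε (dist x x₀) ^ α ∂μ) ≤ F ε) :
    ∀ ε ∈ Set.Ioo (0:ℝ) ε₀',
      Curve.modulus μ' α'
          (Curve.map f ''
            curvesJoining (Metric.sphere x₀ ε) (Metric.sphere x₀ ε₀)
              {x | ε < dist x x₀ ∧ dist x x₀ < ε₀}) ≤
        F ε / (∫⁻ t in Set.Ioo ε ε₀, ψ ε t) ^ α :=
  modulus_le_of_ringQMap_general μ μ' α α' hα G f Q x₀ hf ε₀ ε₀' hε₀' ψ F hψ hI hF
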